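/- arXiv:1212.1112 — 3 statements merged into one kernel-verified Lean document; each statement's English description precedes it below -/
import Mathlib

section
/- For each natural number m, let ψ_m : k[x][t] → k[x,x⁻¹][t] be the unique k-algebra homomorphism sending x to x and t to x^{−m}·t, and let σ : k[x][t] → k[x][t] be the unique k-algebra homomorphism sending x to x and t to x·t (the substitution p(x,t) ↦ p(x,xt)). Then: (1) ψ_{m+1} ∘ σ = ψ_m for every m; (2) each ψ_m is injective; (3) the images ψ_m(k[x][t]) form an increasing chain of k-subalgebras of k[x,x⁻¹][t]; and (4) the union ⋃_{m∈ℕ} ψ_m(k[x][t]) equals the subalgebra R = k[x] + t·k[x,x⁻¹][t]. In other words, R is the colimit of the directed system of k-algebras k[x][t] → k[x][t] → k[x][t] → ⋯ whose transition maps are all equal to σ. -/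
open Polynomial LaurentPolynomial

section aux

variable {k : Type*} [CommRing k]

/-- extensionality for algebra maps out of `k[x][t]` -/
lemma myext {B : Type*} [Semiring B] [Algebra k B]
    {f g : Polynomial (Polynomial k) →ₐ[k] B}
    (h1 : f (Polynomial.C Polynomial.X) = g (Polynomial.C Polynomial.X))
    (h2 : f Polynomial.X = g Polynomial.X) : f = g := by
  apply Polynomial.algHom_ext'
  · apply Polynomial.algHom_ext
    simpa [Polynomial.CAlgHom] using h1
  · exact h2

noncomputable def Psi (k : Type*) [CommRing k] (m : ℕ) :
    Polynomial (Polynomial k) →ₐ[k] Polynomial (LaurentPolynomial k) :=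
  ((Polynomial.aeval (Polynomial.C (T (-(m:ℤ))) * Polynomial.X :
      Polynomial (LaurentPolynomial k))).restrictScalars k).comp
    (Polynomial.mapAlgHom Polynomial.toLaurentAlg)

lemma Psi_CX (m : ℕ) :
    Psi k m (Polynomial.C Polynomial.X) = Polynomial.C (T 1) := by
  simp [Psi, Polynomial.mapAlgHom]

lemma Psi_X (m : ℕ) :
    Psi k m Polynomial.X = Polynomial.C (T (-(m:ℤ))) * Polynomial.X := by
  simp [Psi, Polynomial.mapAlgHom]

lemma Psi_coeff (m : ℕ) (p : Polynomial (Polynomial k)) (j : ℕ) :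
    (Psi k m p).coeff j = T (-(m:ℤ)) ^ j * toLaurent (p.coeff j) := by
  induction p using Polynomial.induction_on' with
  | add p q hp hq => simp [hp, hq, mul_add]
  | monomial n a =>
    simp only [Psi, AlgHom.comp_apply, Polynomial.coe_mapAlgHom, Polynomial.map_monomial,
      AlgHom.coe_restrictScalars', Polynomial.aeval_monomial, Polynomial.coeff_monomial,
      Polynomial.toLaurentAlg_apply, Polynomial.algebraMap_eq]
    rw [mul_pow, ← Polynomial.C_pow, ← mul_assoc, ← Polynomial.C_mul, Polynomial.coeff_C_mul, Polynomial.coeff_X_pow,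
      AlgHom.coe_toRingHom, Polynomial.coe_toLaurentAlg]
    rcases eq_or_ne n j with h | h
    · subst h; rw [if_pos rfl, if_pos rfl, mul_one]; ring
    · simp [h, Ne.symm h]

lemma Psi_injective (m : ℕ) : Function.Injective (Psi k m) := by
  intro p q h
  apply Polynomial.ext; intro j
  have h2 := congrArg (fun r => r.coeff j) h
  simp only [Psi_coeff] at h2
  have hu : IsUnit (T (-(m:ℤ)) ^ j : LaurentPolynomial k) := (isUnit_T _).pow j
  exact Polynomial.toLaurent_injective ((hu.mul_right_inj).mp h2)

end aux

/-- The subalgebra `R = k[x] + t·k[x,x⁻¹][t]` of `k[x,x⁻¹][t]`, consisting of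
those polynomials in `t` whose constant coefficient (in `t`) lies in
`k[x] ⊆ k[x,x⁻¹]`. -/
noncomputable def Rsub (k : Type*) [CommRing k] :
    Subalgebra k (Polynomial (LaurentPolynomial k)) :=
  Subalgebra.comap
    ((Polynomial.aeval (0 : LaurentPolynomial k)).restrictScalars k)
    (Polynomial.toLaurentAlg (R := k)).range

lemma mem_Rsub {k : Type*} [CommRing k] (q : Polynomial (LaurentPolynomial k)) :
    q ∈ Rsub k ↔ q.coeff 0 ∈ Set.range (toLaurent (R := k)) := by
  simp [Rsub, Subalgebra.mem_comap, Polynomial.coeff_zero_eq_eval_zero,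
    ← Polynomial.coe_aeval_eq_eval, Set.mem_range, Polynomial.toLaurentAlg_apply]

/-- Identification of the colimit of diagram (5.2) in Section 5 of the paper:
for the `k`-algebra homomorphisms `ψₘ : k[x][t] → k[x,x⁻¹][t]`, `x ↦ x`,
`t ↦ x⁻ᵐ·t`, and `σ : k[x][t] → k[x][t]`, `x ↦ x`, `t ↦ x·t`, one has
`ψ_{m+1} ∘ σ = ψₘ`, each `ψₘ` is injective, the images `ψₘ(k[x][t])` form an
increasing chain, and their union is `R = k[x] + t·k[x,x⁻¹][t]`; i.e. `R` is
the colimit of `k[x][t] → k[x][t] → ⋯` with all transition maps `σ`. -/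
theorem stmt2 (k : Type*) [CommRing k]
    (ψ : ℕ → (Polynomial (Polynomial k) →ₐ[k] Polynomial (LaurentPolynomial k)))
    (hψx : ∀ m : ℕ, ψ m (Polynomial.C Polynomial.X) =
      Polynomial.C (LaurentPolynomial.T 1))
    (hψt : ∀ m : ℕ, ψ m Polynomial.X =
      Polynomial.C (LaurentPolynomial.T (-(m : ℤ))) * Polynomial.X)
    (σ : Polynomial (Polynomial k) →ₐ[k] Polynomial (Polynomial k))
    (hσx : σ (Polynomial.C Polynomial.X) = Polynomial.C Polynomial.X)
    (hσt : σ Polynomial.X = Polynomial.C Polynomial.X * Polynomial.X) :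
    (∀ m : ℕ, (ψ (m + 1)).comp σ = ψ m) ∧
    (∀ m : ℕ, Function.Injective (ψ m)) ∧
    (∀ m : ℕ, (ψ m).range ≤ (ψ (m + 1)).range) ∧
    (⋃ m : ℕ, ((ψ m).range : Set (Polynomial (LaurentPolynomial k)))) =
      (Rsub k : Set (Polynomial (LaurentPolynomial k))) := by
  have hpsi : ∀ m, ψ m = Psi k m := fun m =>
    myext (by rw [hψx, Psi_CX]) (by rw [hψt, Psi_X])
  have h1 : ∀ m : ℕ, (ψ (m + 1)).comp σ = ψ m := by
    intro m
    apply myext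
    · simp [hσx, hψx]
    · simp only [AlgHom.comp_apply, hσt, map_mul, hψx, hψt]
      rw [← mul_assoc, ← Polynomial.C_mul, ← LaurentPolynomial.T_add]
      congr 2
      push_cast
      ring_nf
  refine ⟨h1, fun m => by rw [hpsi]; exact Psi_injective m, ?_, ?_⟩
  · rintro m q ⟨p, hp⟩
    exact ⟨σ p, by rw [← hp, ← h1 m]; rfl⟩
  · ext q
    simp only [Set.mem_iUnion, SetLike.mem_coe, AlgHom.mem_range, mem_Rsub]
    constructor
    · rintro ⟨m, p, rfl⟩
      rw [hpsi]
      exact ⟨p.coeff 0, by simp [Psi_coeff]⟩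
    · rintro ⟨a, ha⟩
      have key0 : ∀ j : ℕ, ∃ (nn : ℕ) (f' : Polynomial k),
          toLaurent f' = q.coeff j * T nn := fun j => (q.coeff j).exists_T_pow
      choose n f hf using key0
      set m := q.support.sup n with hm
      have key : ∀ j : ℕ, ∃ p' : Polynomial k,
          toLaurent p' = T ((m:ℤ) * j) * q.coeff j := by
        intro j
        rcases Nat.eq_zero_or_pos j with hj | hj
        · subst hj
          exact ⟨a, by simpa using ha⟩
        · by_cases hs : j ∈ q.support
          · have hle : n j ≤ m * j :=
              le_trans (Finset.le_sup hs) (Nat.le_mul_of_pos_right m hj)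
            refine ⟨f j * Polynomial.X ^ (m * j - n j), ?_⟩
            rw [map_mul, hf, Polynomial.toLaurent_X_pow, mul_assoc, ← LaurentPolynomial.T_add,
              mul_comm]
            congr 2
            push_cast [Nat.cast_sub hle]
            ring
          · exact ⟨0, by simp [Polynomial.notMem_support_iff.mp hs]⟩
      choose p' hp' using key
      refine ⟨m, ∑ j ∈ q.support, Polynomial.monomial j (p' j), ?_⟩
      rw [hpsi]
      apply Polynomial.ext; intro j
      rw [Psi_coeff, Polynomial.finset_sum_coeff]
      have hc : (∑ j' ∈ q.support, (Polynomial.monomial j' (p' j')).coeff j)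
          = if j ∈ q.support then p' j else 0 := by
        rw [Finset.sum_congr rfl (fun j' _ => Polynomial.coeff_monomial (n := j') (a := p' j'))]
        exact Finset.sum_ite_eq' q.support j p'
      rw [hc]
      by_cases hs : j ∈ q.support
      · rw [if_pos hs, hp', LaurentPolynomial.T_pow, ← mul_assoc, ← LaurentPolynomial.T_add]
        have : (j : ℤ) * -(m : ℤ) + (m : ℤ) * j = 0 := by ring
        rw [this, LaurentPolynomial.T_zero, one_mul]
      · rw [if_neg hs, Polynomial.notMem_support_iff.mp hs]
        simp
end

section
/- The element x of R is a regular element (not a zero divisor), x is invertible in k[x,x⁻¹][t], and the inclusion R ↪ k[x,x⁻¹][t] exhibits k[x,x⁻¹][t] as the localization of R at the multiplicative submonoid {xⁿ : n ≥ 0} of powers of x; that is, every element of k[x,x⁻¹][t] can be written as r·x^{−n} for some r ∈ R and n ≥ 0, and r·x^{−n} = 0 in k[x,x⁻¹][t] only if x^{m}·r = 0 in R for some m ≥ 0. -/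
/-- The element `x` of `R`, i.e. the constant polynomial (in `t`) `x ∈ k[x,x⁻¹]`. -/
noncomputable def xR (k : Type*) [CommRing k] : Rsub k :=
  ⟨Polynomial.C (LaurentPolynomial.T (R := k) 1), by
    simp only [Rsub, Subalgebra.mem_comap, AlgHom.coe_restrictScalars', Polynomial.aeval_C]
    exact ⟨Polynomial.X, by simp [Polynomial.toLaurentAlg_apply, Polynomial.toLaurent_X]⟩⟩

/-!
The constant coefficient of any `s ∈ k[x,x⁻¹][t]` is `p / xⁿ` for some `p ∈ k[x]`, so `s · xⁿ ∈ R`.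
As `R` sits inside `k[x,x⁻¹][t]`, where `x` is a unit, this is all that being the localization
at the powers of `x` requires, and regularity of `x` in `R` is inherited from the ambient ring.
-/

theorem IsRegular.of_map {M N F : Type*} [Mul M] [Mul N] [FunLike F M N] [MulHomClass F M N]
    (f : F) (hf : Function.Injective f) {a : M} (h : IsRegular (f a)) : IsRegular a :=
  ⟨fun b c hbc => hf (h.left (by simpa only [map_mul] using congrArg f hbc)),
    fun b c hbc => hf (h.right (by simpa only [map_mul] using congrArg f hbc))⟩

theorem Subalgebra.isLocalization_of_forall_exists_mul_mem {R A : Type*} [CommRing R]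
    [CommRing A] [Algebra R A] (S : Subalgebra R A) (M : Submonoid S)
    (hM : ∀ m ∈ M, IsUnit (m : A)) (h : ∀ a : A, ∃ m ∈ M, a * m ∈ S) :
    IsLocalization M A where
  map_units m := hM m m.2
  surj a := by
    obtain ⟨m, hm, ham⟩ := h a
    exact ⟨⟨⟨_, ham⟩, ⟨m, hm⟩⟩, rfl⟩
  exists_of_eq {a b} hab := ⟨1, by simpa using Subtype.val_injective hab⟩

section

variable (k : Type*) [CommRing k]

theorem mem_Rsub_iff (s : Polynomial (LaurentPolynomial k)) :
    s ∈ Rsub k ↔ ∃ p : Polynomial k, Polynomial.toLaurent p = s.coeff 0 := by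
  simp only [Rsub, Subalgebra.mem_comap, AlgHom.coe_restrictScalars', AlgHom.mem_range,
    Polynomial.toLaurentAlg_apply, Polynomial.coeff_zero_eq_aeval_zero]

theorem isUnit_coe_xR : IsUnit ((xR k : Polynomial (LaurentPolynomial k))) :=
  (LaurentPolynomial.isUnit_T 1).map Polynomial.C

theorem exists_mul_coe_xR_pow_mem_Rsub (s : Polynomial (LaurentPolynomial k)) :
    ∃ n : ℕ, s * (xR k : Polynomial (LaurentPolynomial k)) ^ n ∈ Rsub k := by
  obtain ⟨n, p, hp⟩ := (s.coeff 0).exists_T_pow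
  refine ⟨n, (mem_Rsub_iff k _).2 ⟨p, ?_⟩⟩
  rw [xR, ← Polynomial.C_pow, Polynomial.coeff_mul_C, LaurentPolynomial.T_pow, mul_one, hp]

end

/-- The claim `R[S₁⁻¹] = k[x,x⁻¹][t]`, `S₁ = {xⁿ}`, of Section 5 of the paper:
`x` is a regular element of `R`, `x` is invertible in `k[x,x⁻¹][t]`, and the
inclusion `R ↪ k[x,x⁻¹][t]` exhibits `k[x,x⁻¹][t]` as the localization of `R`
at the multiplicative submonoid of powers of `x`: every element of
`k[x,x⁻¹][t]` is of the form `r·x⁻ⁿ` with `r ∈ R`, `n ≥ 0`, and `r·x⁻ⁿ = 0`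
only if `xᵐ·r = 0` in `R` for some `m ≥ 0`. -/
theorem stmt3 (k : Type*) [CommRing k] :
    IsRegular (xR k) ∧
    IsUnit ((xR k : Polynomial (LaurentPolynomial k))) ∧
    IsLocalization (Submonoid.powers (xR k)) (Polynomial (LaurentPolynomial k)) ∧
    (∀ s : Polynomial (LaurentPolynomial k), ∃ (r : Rsub k) (n : ℕ),
      s * (xR k : Polynomial (LaurentPolynomial k)) ^ n = (r : Polynomial (LaurentPolynomial k))) ∧
    (∀ (r : Rsub k) (n : ℕ) (s : Polynomial (LaurentPolynomial k)),
      s * (xR k : Polynomial (LaurentPolynomial k)) ^ n = (r : Polynomial (LaurentPolynomial k)) →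
      s = 0 → ∃ m : ℕ, xR k ^ m * r = 0) := by
  have hx := isUnit_coe_xR k
  refine ⟨.of_map (Rsub k).val Subtype.val_injective hx.isRegular, hx, ?_, fun s => ?_, ?_⟩
  · refine (Rsub k).isLocalization_of_forall_exists_mul_mem _ ?_ fun s => ?_
    · rintro _ ⟨n, rfl⟩
      simpa using hx.pow n
    · obtain ⟨n, hn⟩ := exists_mul_coe_xR_pow_mem_Rsub k s
      exact ⟨xR k ^ n, ⟨n, rfl⟩, by simpa using hn⟩
  · obtain ⟨n, hn⟩ := exists_mul_coe_xR_pow_mem_Rsub k s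
    exact ⟨⟨_, hn⟩, n, rfl⟩
  · rintro r n s hsr rfl
    refine ⟨0, Subtype.val_injective ?_⟩
    simpa using hsr.symm
end

section
/- The evaluation map t ↦ 0 induces an isomorphism of k-modules k[x,x⁻¹][t] / R ≅ k[x,x⁻¹] / k[x] between the quotient of k[x,x⁻¹][t] by the k-submodule R and the quotient of k[x,x⁻¹] by the k-submodule k[x]. (Equivalently: the commutative square formed by the inclusions R ⊆ k[x,x⁻¹][t] and k[x] ⊆ k[x,x⁻¹] and the two evaluation-at-zero maps is a quasi-isomorphism of two-term complexes, since both inclusions are injective and the induced map on cokernels is bijective.) -/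
/-- The quasi-isomorphism claim of Section 5 of the paper: the evaluation
`t ↦ 0` induces an isomorphism of `k`-modules
`k[x,x⁻¹][t] / R ≅ k[x,x⁻¹] / k[x]`. -/
theorem stmt5 (k : Type*) [CommRing k] :
    ∃ e : (Polynomial (LaurentPolynomial k) ⧸
            Subalgebra.toSubmodule (Rsub k)) ≃ₗ[k]
          (LaurentPolynomial k ⧸
            LinearMap.range (Polynomial.toLaurentAlg (R := k)).toLinearMap),
      ∀ p : Polynomial (LaurentPolynomial k),
        e (Submodule.Quotient.mk p) =
          Submodule.Quotient.mk (Polynomial.aeval (0 : LaurentPolynomial k) p) := by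
  set f : Polynomial (LaurentPolynomial k) →ₗ[k] LaurentPolynomial k :=
    ((Polynomial.aeval (0 : LaurentPolynomial k)).restrictScalars k).toLinearMap with hf
  set N : Submodule k (LaurentPolynomial k) :=
    LinearMap.range (Polynomial.toLaurentAlg (R := k)).toLinearMap with hN
  have hmem : ∀ p : Polynomial (LaurentPolynomial k),
      p ∈ Subalgebra.toSubmodule (Rsub k) ↔ f p ∈ N := by
    intro p
    constructor
    · rintro ⟨q, hq⟩
      exact ⟨q, hq⟩
    · rintro ⟨q, hq⟩
      exact ⟨q, hq⟩
  have hle : Subalgebra.toSubmodule (Rsub k) ≤ N.comap f := fun p hp => (hmem p).mp hp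
  let g := Submodule.mapQ (Subalgebra.toSubmodule (Rsub k)) N f hle
  have hg : ∀ p : Polynomial (LaurentPolynomial k),
      g (Submodule.Quotient.mk p) = Submodule.Quotient.mk (f p) := fun p => rfl
  have hbij : Function.Bijective g := by
    constructor
    · rw [← LinearMap.ker_eq_bot, eq_bot_iff]
      intro x hx
      obtain ⟨p, rfl⟩ := Submodule.Quotient.mk_surjective _ x
      rw [LinearMap.mem_ker, hg, Submodule.Quotient.mk_eq_zero] at hx
      simpa [Submodule.Quotient.mk_eq_zero] using (hmem p).mpr hx
    · intro y
      obtain ⟨q, rfl⟩ := Submodule.Quotient.mk_surjective _ y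
      refine ⟨Submodule.Quotient.mk (Polynomial.C q), ?_⟩
      rw [hg]
      congr 1
      simp [hf]
  exact ⟨LinearEquiv.ofBijective g hbij, fun p => hg p⟩
end
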